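/- For n ≥ 10, the projection chain of the Metropolized mixture sampler on the complete-graph Ising model at β = ln n has spectral gap bounded below by a universal positive constant: specifically, the two-state projection P̄(i,j) = (1/π̄(i)) ∑_{S∈Ω_i, R∈Ω_j} π(S) P_M(S,R), with Ω₀ = {S : |S| < n/2}, Ω₁ = {S : |S| > n/2} (n odd), satisfies P̄(0,1) ≥ c·π̄(1) for a constant c > 0 independent of n, and hence its spectral gap is Ω(1). -/

import Mathlib

open Finset

/-- Ising energy `F(S) = -(2 ln n / n)|S|(n-|S|)` on the complete graph. -/
noncomputable def isingF (n : ℕ) (S : Finset (Fin n)) : ℝ :=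
  -(2 * Real.log n / n) * S.card * ((n : ℝ) - S.card)

/-- Partition function of the Ising model. -/
noncomputable def isingZ (n : ℕ) : ℝ :=
  ∑ S : Finset (Fin n), Real.exp (isingF n S)

/-- Stationary distribution `π(S) = exp(F(S))/Z`. -/
noncomputable def isingPi (n : ℕ) (S : Finset (Fin n)) : ℝ :=
  Real.exp (isingF n S) / isingZ n

/-- The two-component log-modular mixture proposal used for the Ising model:
`q(S) = (1/2)(exp(-δ(n-1)|S|)/Z₁ + exp(δ(n-1)|S|)/Z₂)` with `δ = 2 ln n / n`,
`Z₁ = (1+e^{-δ(n-1)})^n`, `Z₂ = (1+e^{δ(n-1)})^n`. -/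
noncomputable def isingQ (n : ℕ) (S : Finset (Fin n)) : ℝ :=
  (1 / 2) *
    (Real.exp (-(2 * Real.log n / n) * ((n : ℝ) - 1) * S.card) /
        (1 + Real.exp (-(2 * Real.log n / n) * ((n : ℝ) - 1))) ^ n +
      Real.exp ((2 * Real.log n / n) * ((n : ℝ) - 1) * S.card) /
        (1 + Real.exp ((2 * Real.log n / n) * ((n : ℝ) - 1))) ^ n)

/-- Off-diagonal transition probability of the Metropolis chain with
state-independent proposal `q` and target `π`:
`P_M(S,R) = q(R) · min{1, π(R)q(S)/(π(S)q(R))}` for `S ≠ R`. -/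
noncomputable def isingPM (n : ℕ) (S R : Finset (Fin n)) : ℝ :=
  isingQ n R * min 1 (isingPi n R * isingQ n S / (isingPi n S * isingQ n R))

/-- `Ω₀ = {S : |S| < n/2}`. -/
def Omega0 (n : ℕ) : Finset (Finset (Fin n)) :=
  Finset.univ.filter (fun S => 2 * S.card < n)

/-- `Ω₁ = {S : |S| > n/2}`. -/
def Omega1 (n : ℕ) : Finset (Finset (Fin n)) :=
  Finset.univ.filter (fun S => n < 2 * S.card)

/-! The single move `∅ → V` already carries a flow of constant order across the cut. Both
endpoints have energy `0`, so `π(∅) = π(V) = 1/Z`, and the mixture proposal is symmetric under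
complementation, so `q(∅) = q(V)`: the move is always accepted and `π(∅) P_M(∅, V) = q(∅)/Z`.
Since `2|S|(n - |S|)/n ≥ min(|S|, n - |S|)`, `e^{F(S)} ≤ n^{-|S|} + n^{-(n-|S|)}`, whence
`Z ≤ 2(1 + 1/n)^n ≤ 2e`; the first mixture component alone gives `q(∅) ≥ 1/(2(1 + 1/n)^n) ≥ 1/(2e)`.
As `π̄(0), π̄(1) ≤ 1`, this yields `P̄(0,1) ≥ π̄(1)/(4e²)`. -/

open Real

lemma isingF_compl (n : ℕ) (S : Finset (Fin n)) : isingF n Sᶜ = isingF n S := by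
  have hS : S.card ≤ n := card_le_univ S |>.trans_eq (Fintype.card_fin n)
  simp only [isingF, card_compl, Fintype.card_fin, Nat.cast_sub hS]
  ring

lemma isingF_le_of_two_mul_card_le (n : ℕ) (S : Finset (Fin n)) (h : 2 * S.card ≤ n) :
    isingF n S ≤ -(S.card * log n) := by
  rcases Nat.eq_zero_or_pos n with rfl | hn
  · simp [isingF]
  have hn' : (0 : ℝ) < n := by exact_mod_cast hn
  have h' : (2 * S.card : ℝ) ≤ n := by exact_mod_cast h
  have key : isingF n S + S.card * log n = -(S.card * log n * (n - 2 * S.card) / n) := by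
    unfold isingF; field_simp; ring
  have hgap : 0 ≤ S.card * log n * (n - 2 * S.card) / n := by
    have := log_natCast_nonneg n
    have : (0 : ℝ) ≤ n - 2 * S.card := by linarith
    positivity
  linarith

lemma exp_neg_mul_log (x : ℝ) (hx : 0 < x) (k : ℕ) : exp (-(k * log x)) = x⁻¹ ^ k := by
  rw [exp_neg, exp_nat_mul, exp_log hx, inv_pow]

lemma exp_isingF_le (n : ℕ) (hn : 0 < n) (S : Finset (Fin n)) :
    exp (isingF n S) ≤ (n : ℝ)⁻¹ ^ S.card + (n : ℝ)⁻¹ ^ (n - S.card) := by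
  have hn' : (0 : ℝ) < n := by exact_mod_cast hn
  rcases le_or_gt (2 * S.card) n with h | h
  · calc exp (isingF n S) ≤ (n : ℝ)⁻¹ ^ S.card := by
          rw [← exp_neg_mul_log _ hn']; exact exp_le_exp.2 (isingF_le_of_two_mul_card_le n S h)
      _ ≤ _ := le_add_of_nonneg_right (by positivity)
  · have hc : Sᶜ.card = n - S.card := by rw [card_compl, Fintype.card_fin]
    have h' : 2 * Sᶜ.card ≤ n := by omega
    calc exp (isingF n S) ≤ (n : ℝ)⁻¹ ^ (n - S.card) := by
          rw [← isingF_compl, ← hc, ← exp_neg_mul_log _ hn']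
          exact exp_le_exp.2 (isingF_le_of_two_mul_card_le n Sᶜ h')
      _ ≤ _ := le_add_of_nonneg_left (by positivity)

lemma isingZ_le (n : ℕ) (hn : 0 < n) : isingZ n ≤ 2 * (1 + (n : ℝ)⁻¹) ^ n := by
  set a := (n : ℝ)⁻¹
  calc isingZ n ≤ ∑ S : Finset (Fin n), (a ^ S.card + a ^ (n - S.card)) :=
        sum_le_sum fun S _ => exp_isingF_le n hn S
    _ = ∑ S : Finset (Fin n), a ^ S.card * 1 ^ (n - S.card)
        + ∑ S : Finset (Fin n), 1 ^ S.card * a ^ (n - S.card) := by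
        simp only [one_pow, mul_one, one_mul, sum_add_distrib]
    _ = 2 * (1 + a) ^ n := by
        rw [Fin.sum_pow_mul_eq_add_pow, Fin.sum_pow_mul_eq_add_pow]; ring

lemma isingZ_pos (n : ℕ) : 0 < isingZ n :=
  sum_pos (fun _ _ => exp_pos _) univ_nonempty

lemma isingPi_pos (n : ℕ) (S : Finset (Fin n)) : 0 < isingPi n S :=
  div_pos (exp_pos _) (isingZ_pos n)

lemma sum_isingPi_le_one (n : ℕ) (Ω : Finset (Finset (Fin n))) : ∑ S ∈ Ω, isingPi n S ≤ 1 := by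
  calc ∑ S ∈ Ω, isingPi n S ≤ ∑ S, isingPi n S :=
        sum_le_sum_of_subset_of_nonneg (subset_univ Ω) fun S _ _ => (isingPi_pos n S).le
    _ = 1 := by simp only [isingPi]; rw [← sum_div, ← isingZ, div_self (isingZ_pos n).ne']

lemma isingPi_univ (n : ℕ) : isingPi n univ = isingPi n ∅ := by
  unfold isingPi; rw [← compl_empty, isingF_compl]

lemma isingPi_empty (n : ℕ) : isingPi n ∅ = (isingZ n)⁻¹ := by
  simp [isingPi, isingF]

lemma isingQ_pos (n : ℕ) (S : Finset (Fin n)) : 0 < isingQ n S := by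
  unfold isingQ; positivity

lemma exp_mul_div_one_add_exp_pow (B : ℝ) (n : ℕ) :
    exp (B * n) / (1 + exp B) ^ n = ((1 + exp (-B)) ^ n)⁻¹ := by
  rw [mul_comm, exp_nat_mul, ← div_pow, ← inv_pow, exp_neg]
  congr 1
  field_simp
  ring

lemma isingQ_empty (n : ℕ) : isingQ n ∅ =
    (1 / 2) * (((1 + exp (-(2 * log n / n * ((n : ℝ) - 1)))) ^ n)⁻¹
      + ((1 + exp (2 * log n / n * ((n : ℝ) - 1))) ^ n)⁻¹) := by
  simp [isingQ, neg_mul]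

lemma isingQ_univ (n : ℕ) : isingQ n univ = isingQ n ∅ := by
  rw [isingQ_empty, isingQ, card_univ, Fintype.card_fin, neg_mul,
    exp_mul_div_one_add_exp_pow, exp_mul_div_one_add_exp_pow, neg_neg, add_comm]

lemma isingQ_empty_ge (n : ℕ) (hn : 2 ≤ n) : (2 * (1 + (n : ℝ)⁻¹) ^ n)⁻¹ ≤ isingQ n ∅ := by
  have hn' : (2 : ℝ) ≤ n := by exact_mod_cast hn
  set B := 2 * log n / n * ((n : ℝ) - 1) with hB
  have hlog : log n ≤ B := by
    have := log_natCast_nonneg n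
    rw [hB, div_mul_eq_mul_div, le_div_iff₀ (by linarith)]
    nlinarith
  have hexp : exp (-B) ≤ (n : ℝ)⁻¹ := by
    calc exp (-B) ≤ exp (-log n) := exp_le_exp.2 (neg_le_neg hlog)
      _ = (n : ℝ)⁻¹ := by rw [exp_neg, exp_log (by linarith)]
  calc (2 * (1 + (n : ℝ)⁻¹) ^ n)⁻¹ = 1 / 2 * ((1 + (n : ℝ)⁻¹) ^ n)⁻¹ := by ring
    _ ≤ 1 / 2 * ((1 + exp (-B)) ^ n)⁻¹ := by gcongr
    _ ≤ isingQ n ∅ := by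
        rw [isingQ_empty]
        gcongr
        exact le_add_of_nonneg_right (by positivity)

lemma isingPM_nonneg (n : ℕ) (S R : Finset (Fin n)) : 0 ≤ isingPM n S R := by
  have := isingPi_pos n S; have := isingPi_pos n R
  have := isingQ_pos n S; have := isingQ_pos n R
  unfold isingPM; positivity

lemma isingPM_eq_isingQ (n : ℕ) (S R : Finset (Fin n)) (hπ : isingPi n S = isingPi n R)
    (hq : isingQ n S = isingQ n R) : isingPM n S R = isingQ n R := by
  rw [isingPM, hπ, hq, div_self (mul_pos (isingPi_pos n R) (isingQ_pos n R)).ne', min_self,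
    mul_one]

lemma isingPi_empty_mul_isingPM_univ_ge (n : ℕ) (hn : 2 ≤ n) :
    (4 * exp 1 ^ 2)⁻¹ ≤ isingPi n ∅ * isingPM n ∅ univ := by
  have hE := one_add_inv_pow_le_exp (n := n)
  have hZ := isingZ_le n (by omega)
  have hq := isingQ_empty_ge n hn
  rw [isingPM_eq_isingQ n ∅ univ (isingPi_univ n).symm (isingQ_univ n).symm, isingQ_univ,
    isingPi_empty]
  calc (4 * exp 1 ^ 2)⁻¹ = (2 * exp 1)⁻¹ * (2 * exp 1)⁻¹ := by ring
    _ ≤ (2 * (1 + (n : ℝ)⁻¹) ^ n)⁻¹ * (2 * (1 + (n : ℝ)⁻¹) ^ n)⁻¹ := by gcongr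
    _ ≤ (isingZ n)⁻¹ * isingQ n ∅ :=
        mul_le_mul (inv_anti₀ (isingZ_pos n) hZ) hq (by positivity) (inv_nonneg.2 (isingZ_pos n).le)

/-- For all odd `n ≥ 10`, the projection of the Metropolized mixture chain onto
`{Ω₀, Ω₁}` satisfies `P̄(0,1) ≥ c · π̄(1)` for a universal constant `c > 0`
(hence, by the two-state spectral-gap lemma, its spectral gap is `Ω(1)`). -/
theorem ising_projection_gap :
    ∃ c : ℝ, 0 < c ∧ ∀ n : ℕ, 10 ≤ n → Odd n →
      c * (∑ S ∈ Omega1 n, isingPi n S) ≤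
        (1 / ∑ S ∈ Omega0 n, isingPi n S) *
          ∑ S ∈ Omega0 n, ∑ R ∈ Omega1 n, isingPi n S * isingPM n S R := by
  refine ⟨(4 * exp 1 ^ 2)⁻¹, by positivity, fun n hn _ => ?_⟩
  have hempty : ∅ ∈ Omega0 n := by simp [Omega0]; omega
  have huniv : univ ∈ Omega1 n := by simp [Omega1]; omega
  have hterm (S R : Finset (Fin n)) : 0 ≤ isingPi n S * isingPM n S R :=
    mul_nonneg (isingPi_pos n S).le (isingPM_nonneg n S R)
  have hflow : 0 ≤ ∑ S ∈ Omega0 n, ∑ R ∈ Omega1 n, isingPi n S * isingPM n S R :=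
    sum_nonneg fun S _ => sum_nonneg fun R _ => hterm S R
  calc (4 * exp 1 ^ 2)⁻¹ * ∑ S ∈ Omega1 n, isingPi n S ≤ (4 * exp 1 ^ 2)⁻¹ :=
        mul_le_of_le_one_right (by positivity) (sum_isingPi_le_one n _)
    _ ≤ isingPi n ∅ * isingPM n ∅ univ := isingPi_empty_mul_isingPM_univ_ge n (by omega)
    _ ≤ ∑ R ∈ Omega1 n, isingPi n ∅ * isingPM n ∅ R :=
        single_le_sum (fun R _ => hterm ∅ R) huniv
    _ ≤ ∑ S ∈ Omega0 n, ∑ R ∈ Omega1 n, isingPi n S * isingPM n S R :=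
        single_le_sum (f := fun S => ∑ R ∈ Omega1 n, isingPi n S * isingPM n S R)
          (fun S _ => sum_nonneg fun R _ => hterm S R) hempty
    _ ≤ _ := by
        rw [one_div_mul_eq_div]
        exact le_div_self hflow (sum_pos (fun S _ => isingPi_pos n S) ⟨∅, hempty⟩)
          (sum_isingPi_le_one n _)
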